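/- (First derivative of the virial potential, focusing divergence-form model) Let d ≥ 1 and p > 0, and let u : ℝ × ℝ^d × ℝ → ℂ, written u = u(t,x,α), be infinitely differentiable, with a compact set K ⊆ ℝ^d × ℝ such that u(t,x,α) = 0 whenever (x,α) ∉ K (for every t), satisfying pointwise the focusing equation i ∂_t u + Δ_x u + ∂_α(e^{−α²/2} ∂_α u) = −|u|^p u. Then V(t) = ∫_{ℝ^d×ℝ} |x|²·|u(t,x,α)|² dx dα is differentiable in t and V'(t) = 4·Im ∫_{ℝ^d×ℝ} ( ∑_{j=1}^d x_j·∂_{x_j}u(t,x,α) )·conj(u(t,x,α)) dx dα. -/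

import Mathlib

open MeasureTheory

noncomputable section

/-- Partial derivative in the time variable. -/
def pdT {d : ℕ} (u : ℝ → (Fin d → ℝ) → ℝ → ℂ) : ℝ → (Fin d → ℝ) → ℝ → ℂ :=
  fun t x α => deriv (fun s => u s x α) t

/-- Partial derivative in the `j`-th Euclidean variable. -/
def pdX {d : ℕ} (j : Fin d) (u : ℝ → (Fin d → ℝ) → ℝ → ℂ) : ℝ → (Fin d → ℝ) → ℝ → ℂ :=
  fun t x α => deriv (fun s => u t (Function.update x j s) α) (x j)

/-- Partial derivative in the Ornstein–Uhlenbeck variable `α`. -/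
def pdA {d : ℕ} (u : ℝ → (Fin d → ℝ) → ℝ → ℂ) : ℝ → (Fin d → ℝ) → ℝ → ℂ :=
  fun t x α => deriv (fun s => u t x s) α

/-- Laplacian in the Euclidean variables: `Δ_x u = ∑_j ∂²u/∂x_j²`. -/
def lapX {d : ℕ} (u : ℝ → (Fin d → ℝ) → ℝ → ℂ) : ℝ → (Fin d → ℝ) → ℝ → ℂ :=
  fun t x α => ∑ j : Fin d, pdX j (pdX j u) t x α

/-- The divergence-form Ornstein–Uhlenbeck operator: `∂_α (e^{-α²/2} ∂_α u)`. -/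
def ouDiv {d : ℕ} (u : ℝ → (Fin d → ℝ) → ℝ → ℂ) : ℝ → (Fin d → ℝ) → ℝ → ℂ :=
  pdA (fun t x α => (Real.exp (-α ^ 2 / 2) : ℂ) * pdA u t x α)

end

noncomputable def unc {d : ℕ} (u : ℝ → (Fin d → ℝ) → ℝ → ℂ) : ℝ × (Fin d → ℝ) × ℝ → ℂ :=
  fun q => u q.1 q.2.1 q.2.2

section Aux

variable {d : ℕ} {u : ℝ → (Fin d → ℝ) → ℝ → ℂ}

theorem hasDerivAt_T (hu : Differentiable ℝ (unc u)) (t : ℝ) (x : Fin d → ℝ) (α : ℝ) :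
    HasDerivAt (fun s => u s x α) (fderiv ℝ (unc u) (t, x, α) (1, 0, 0)) t := by
  have h1 : HasDerivAt (fun s : ℝ => ((s, x, α) : ℝ × (Fin d → ℝ) × ℝ))
      ((1 : ℝ), (0 : Fin d → ℝ), (0 : ℝ)) t :=
    (hasDerivAt_id t).prodMk ((hasDerivAt_const t x).prodMk (hasDerivAt_const t α))
  exact (hu (t, x, α)).hasFDerivAt.comp_hasDerivAt t h1

theorem hasDerivAt_X (hu : Differentiable ℝ (unc u)) (j : Fin d) (t : ℝ) (x : Fin d → ℝ) (α : ℝ) :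
    HasDerivAt (fun s => u t (Function.update x j s) α)
      (fderiv ℝ (unc u) (t, x, α) (0, Pi.single j 1, 0)) (x j) := by
  have h1 : HasDerivAt (fun s : ℝ => ((t, Function.update x j s, α) : ℝ × (Fin d → ℝ) × ℝ))
      ((0 : ℝ), Pi.single j 1, (0 : ℝ)) (x j) :=
    (hasDerivAt_const _ t).prodMk ((hasDerivAt_update x j (x j)).prodMk (hasDerivAt_const _ α))
  have h2 := (hu (t, Function.update x j (x j), α)).hasFDerivAt.comp_hasDerivAt (x j) h1
  rwa [Function.update_eq_self] at h2

theorem hasDerivAt_A (hu : Differentiable ℝ (unc u)) (t : ℝ) (x : Fin d → ℝ) (α : ℝ) :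
    HasDerivAt (fun s => u t x s) (fderiv ℝ (unc u) (t, x, α) (0, 0, 1)) α := by
  have h1 : HasDerivAt (fun s : ℝ => ((t, x, s) : ℝ × (Fin d → ℝ) × ℝ))
      ((0 : ℝ), (0 : Fin d → ℝ), (1 : ℝ)) α :=
    (hasDerivAt_const _ t).prodMk ((hasDerivAt_const _ x).prodMk (hasDerivAt_id α))
  exact (hu (t, x, α)).hasFDerivAt.comp_hasDerivAt α h1

theorem pdT_eq (hu : Differentiable ℝ (unc u)) (t : ℝ) (x : Fin d → ℝ) (α : ℝ) :
    pdT u t x α = fderiv ℝ (unc u) (t, x, α) (1, 0, 0) := (hasDerivAt_T hu t x α).deriv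

theorem pdX_eq (hu : Differentiable ℝ (unc u)) (j : Fin d) (t : ℝ) (x : Fin d → ℝ) (α : ℝ) :
    pdX j u t x α = fderiv ℝ (unc u) (t, x, α) (0, Pi.single j 1, 0) :=
  (hasDerivAt_X hu j t x α).deriv

theorem pdA_eq (hu : Differentiable ℝ (unc u)) (t : ℝ) (x : Fin d → ℝ) (α : ℝ) :
    pdA u t x α = fderiv ℝ (unc u) (t, x, α) (0, 0, 1) := (hasDerivAt_A hu t x α).deriv

theorem hasDerivAt_pdT (hu : Differentiable ℝ (unc u)) (t : ℝ) (x : Fin d → ℝ) (α : ℝ) :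
    HasDerivAt (fun s => u s x α) (pdT u t x α) t :=
  (pdT_eq hu t x α) ▸ hasDerivAt_T hu t x α

theorem hasDerivAt_pdX (hu : Differentiable ℝ (unc u)) (j : Fin d) (t : ℝ) (x : Fin d → ℝ)
    (α : ℝ) : HasDerivAt (fun s => u t (Function.update x j s) α) (pdX j u t x α) (x j) :=
  (pdX_eq hu j t x α) ▸ hasDerivAt_X hu j t x α

theorem hasDerivAt_pdA (hu : Differentiable ℝ (unc u)) (t : ℝ) (x : Fin d → ℝ) (α : ℝ) :
    HasDerivAt (fun s => u t x s) (pdA u t x α) α :=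
  (pdA_eq hu t x α) ▸ hasDerivAt_A hu t x α

theorem contDiff_fderiv_apply (hu : ContDiff ℝ (⊤ : ℕ∞) (unc u)) (v : ℝ × (Fin d → ℝ) × ℝ) :
    ContDiff ℝ (⊤ : ℕ∞) (fun q => fderiv ℝ (unc u) q v) :=
  (hu.fderiv_right (m := (⊤ : ℕ∞)) (by exact_mod_cast le_top)).clm_apply contDiff_const

theorem contDiff_unc_pdT (hu : ContDiff ℝ (⊤ : ℕ∞) (unc u)) :
    ContDiff ℝ (⊤ : ℕ∞) (unc (pdT u)) := by
  have : unc (pdT u) = fun q => fderiv ℝ (unc u) q (1, 0, 0) := by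
    funext q
    exact pdT_eq (hu.differentiable (by simp)) q.1 q.2.1 q.2.2
  rw [this]; exact contDiff_fderiv_apply hu _

theorem contDiff_unc_pdX (hu : ContDiff ℝ (⊤ : ℕ∞) (unc u)) (j : Fin d) :
    ContDiff ℝ (⊤ : ℕ∞) (unc (pdX j u)) := by
  have : unc (pdX j u) = fun q => fderiv ℝ (unc u) q (0, Pi.single j 1, 0) := by
    funext q
    exact pdX_eq (hu.differentiable (by simp)) j q.1 q.2.1 q.2.2
  rw [this]; exact contDiff_fderiv_apply hu _

theorem contDiff_unc_pdA (hu : ContDiff ℝ (⊤ : ℕ∞) (unc u)) :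
    ContDiff ℝ (⊤ : ℕ∞) (unc (pdA u)) := by
  have : unc (pdA u) = fun q => fderiv ℝ (unc u) q (0, 0, 1) := by
    funext q
    exact pdA_eq (hu.differentiable (by simp)) q.1 q.2.1 q.2.2
  rw [this]; exact contDiff_fderiv_apply hu _

theorem supp_pdT {K : Set ((Fin d → ℝ) × ℝ)}
    (h0 : ∀ (t : ℝ) (x : Fin d → ℝ) (α : ℝ), (x, α) ∉ K → u t x α = 0)
    (t : ℝ) (x : Fin d → ℝ) (α : ℝ) (hq : (x, α) ∉ K) : pdT u t x α = 0 := by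
  have : (fun s => u s x α) = fun _ => 0 := funext fun s => h0 s x α hq
  show deriv (fun s => u s x α) t = 0
  rw [this, deriv_const]

theorem supp_pdX {K : Set ((Fin d → ℝ) × ℝ)} (hK : IsClosed K)
    (h0 : ∀ (t : ℝ) (x : Fin d → ℝ) (α : ℝ), (x, α) ∉ K → u t x α = 0)
    (j : Fin d) (t : ℝ) (x : Fin d → ℝ) (α : ℝ) (hq : (x, α) ∉ K) : pdX j u t x α = 0 := by
  have hc0 : Continuous (fun s : ℝ => Function.update x j s) :=
    continuous_const.update j continuous_id
  have hopen : IsOpen {s : ℝ | ((Function.update x j s, α) : (Fin d → ℝ) × ℝ) ∉ K} :=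
    hK.isOpen_compl.preimage (hc0.prodMk continuous_const)
  have hmem : x j ∈ {s : ℝ | ((Function.update x j s, α) : (Fin d → ℝ) × ℝ) ∉ K} := by
    simpa [Function.update_eq_self] using hq
  have hev : (fun s => u t (Function.update x j s) α) =ᶠ[nhds (x j)] (fun _ => 0) := by
    filter_upwards [hopen.mem_nhds hmem] with s hs
    exact h0 t _ α hs
  show deriv (fun s => u t (Function.update x j s) α) (x j) = 0
  rw [hev.deriv_eq, deriv_const]

theorem supp_pdA {K : Set ((Fin d → ℝ) × ℝ)} (hK : IsClosed K)
    (h0 : ∀ (t : ℝ) (x : Fin d → ℝ) (α : ℝ), (x, α) ∉ K → u t x α = 0)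
    (t : ℝ) (x : Fin d → ℝ) (α : ℝ) (hq : (x, α) ∉ K) : pdA u t x α = 0 := by
  have hopen : IsOpen {s : ℝ | ((x, s) : (Fin d → ℝ) × ℝ) ∉ K} :=
    hK.isOpen_compl.preimage (continuous_const.prodMk continuous_id)
  have hev : (fun s => u t x s) =ᶠ[nhds α] (fun _ => 0) := by
    filter_upwards [hopen.mem_nhds hq] with s hs
    exact h0 t x s hs
  show deriv (fun s => u t x s) α = 0
  rw [hev.deriv_eq, deriv_const]

end Aux

theorem oneD {f : ℝ → ℝ} (hf : ContDiff ℝ 1 f) (h2 : HasCompactSupport f) :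
    ∫ x : ℝ, deriv f x = 0 := by
  have hi : Integrable (deriv f) :=
    ((hf.continuous_deriv le_rfl).integrable_of_hasCompactSupport h2.deriv)
  rw [← intervalIntegral.integral_Iic_add_Ioi hi.integrableOn hi.integrableOn (b := 0),
    HasCompactSupport.integral_Iic_deriv_eq hf h2 0,
    HasCompactSupport.integral_Ioi_deriv_eq hf h2 0]
  ring
theorem int_pdA_zero {d : ℕ} (g : (Fin d → ℝ) × ℝ → ℝ) (hg : ContDiff ℝ (⊤ : ℕ∞) g)
    {K : Set ((Fin d → ℝ) × ℝ)} (hK : IsCompact K) (h0 : ∀ q, q ∉ K → g q = 0) :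
    ∫ q : (Fin d → ℝ) × ℝ, deriv (fun s => g (q.1, s)) q.2 = 0 := by
  set G : (Fin d → ℝ) × ℝ → ℝ := fun q => deriv (fun s => g (q.1, s)) q.2 with hG
  have hGrep : ∀ q : (Fin d → ℝ) × ℝ, G q = fderiv ℝ g q ((0 : Fin d → ℝ), (1 : ℝ)) := by
    rintro ⟨x, α⟩
    have h1 : HasDerivAt (fun s : ℝ => ((x, s) : (Fin d → ℝ) × ℝ)) ((0 : Fin d → ℝ), (1 : ℝ)) α :=
      (hasDerivAt_const _ x).prodMk (hasDerivAt_id α)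
    exact (((hg.differentiable (by simp)) (x, α)).hasFDerivAt.comp_hasDerivAt
      α h1).deriv
  have hGcont : Continuous G := by
    have : G = fun q => fderiv ℝ g q ((0 : Fin d → ℝ), (1 : ℝ)) := funext hGrep
    rw [this]
    exact ((hg.fderiv_right (m := (⊤ : ℕ∞)) (by exact_mod_cast le_top)).clm_apply
      contDiff_const).continuous
  have hGsupp : ∀ q, q ∉ K → G q = 0 := by
    rintro ⟨x, α⟩ hq
    have hopen : IsOpen {s : ℝ | ((x, s) : (Fin d → ℝ) × ℝ) ∉ K} :=
      hK.isClosed.isOpen_compl.preimage (continuous_const.prodMk continuous_id)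
    have hev : (fun s => g (x, s)) =ᶠ[nhds α] (fun _ => 0) := by
      filter_upwards [hopen.mem_nhds hq] with s hs
      exact h0 (x, s) hs
    simpa [hG] using hev.deriv_eq.trans (deriv_const α 0)
  have hGint : Integrable G := hGcont.integrable_of_hasCompactSupport
    (HasCompactSupport.intro hK hGsupp)
  rw [Measure.volume_eq_prod] at hGint ⊢
  rw [integral_prod G hGint]
  have hinner : ∀ x : Fin d → ℝ, (∫ α : ℝ, G (x, α)) = 0 := by
    intro x
    have hf : ContDiff ℝ 1 (fun s : ℝ => g (x, s)) :=
      (hg.of_le (by exact_mod_cast le_top)).comp (contDiff_const.prodMk contDiff_id)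
    have hCc : IsCompact {s : ℝ | ((x, s) : (Fin d → ℝ) × ℝ) ∈ K} := by
      refine (hK.image continuous_snd).of_isClosed_subset
        (hK.isClosed.preimage (continuous_const.prodMk continuous_id)) ?_
      intro s hs
      exact ⟨(x, s), hs, rfl⟩
    have h2 : HasCompactSupport (fun s : ℝ => g (x, s)) :=
      HasCompactSupport.intro hCc (fun s hs => h0 (x, s) hs)
    exact oneD hf h2
  simp only [hinner, integral_zero]
theorem int_pdX_zero {n : ℕ} (j : Fin (n + 1)) (g : (Fin (n + 1) → ℝ) × ℝ → ℝ)
    (hg : ContDiff ℝ (⊤ : ℕ∞) g) {K : Set ((Fin (n + 1) → ℝ) × ℝ)} (hK : IsCompact K)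
    (h0 : ∀ q, q ∉ K → g q = 0) :
    ∫ q : (Fin (n + 1) → ℝ) × ℝ, deriv (fun s => g (Function.update q.1 j s, q.2)) (q.1 j)
      = 0 := by
  set G : (Fin (n + 1) → ℝ) × ℝ → ℝ :=
    fun q => deriv (fun s => g (Function.update q.1 j s, q.2)) (q.1 j) with hGdef
  have hGrep : ∀ q : (Fin (n + 1) → ℝ) × ℝ, G q = fderiv ℝ g q (Pi.single j 1, (0 : ℝ)) := by
    rintro ⟨x, α⟩
    have h1 : HasDerivAt (fun s : ℝ => ((Function.update x j s, α) : (Fin (n + 1) → ℝ) × ℝ))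
        ((Pi.single j 1 : Fin (n + 1) → ℝ), (0 : ℝ)) (x j) :=
      (hasDerivAt_update x j (x j)).prodMk (hasDerivAt_const _ α)
    have h2 := (((hg.differentiable (by simp))
      (Function.update x j (x j), α)).hasFDerivAt.comp_hasDerivAt (x j) h1).deriv
    rwa [Function.update_eq_self] at h2
  have hGcont : Continuous G := by
    have : G = fun q => fderiv ℝ g q (Pi.single j 1, (0 : ℝ)) := funext hGrep
    rw [this]
    exact ((hg.fderiv_right (m := (⊤ : ℕ∞)) (by exact_mod_cast le_top)).clm_apply
      contDiff_const).continuous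
  have hGsupp : ∀ q, q ∉ K → G q = 0 := by
    rintro ⟨x, α⟩ hq
    have hc0 : Continuous (fun s : ℝ => Function.update x j s) :=
      continuous_const.update j continuous_id
    have hopen : IsOpen {s : ℝ | ((Function.update x j s, α) : (Fin (n + 1) → ℝ) × ℝ) ∉ K} :=
      hK.isClosed.isOpen_compl.preimage (hc0.prodMk continuous_const)
    have hmem : x j ∈ {s : ℝ | ((Function.update x j s, α) : (Fin (n + 1) → ℝ) × ℝ) ∉ K} := by
      simpa [Function.update_eq_self] using hq
    have hev : (fun s => g (Function.update x j s, α)) =ᶠ[nhds (x j)] (fun _ => 0) := by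
      filter_upwards [hopen.mem_nhds hmem] with s hs
      exact h0 _ hs
    simpa [hGdef] using hev.deriv_eq.trans (deriv_const (x j) 0)
  have hGint : Integrable G := hGcont.integrable_of_hasCompactSupport
    (HasCompactSupport.intro hK hGsupp)
  rw [Measure.volume_eq_prod] at hGint ⊢
  rw [integral_prod_symm G hGint]
  have hinner : ∀ α : ℝ, (∫ x : Fin (n + 1) → ℝ, G (x, α)) = 0 := by
    intro α
    have h : (Fin (n + 1) → ℝ) → ℝ := fun x => G (x, α)
    set e := MeasurableEquiv.piFinSuccAbove (fun _ : Fin (n + 1) => ℝ) j with he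
    have hmp : MeasurePreserving e.symm :=
      (volume_preserving_piFinSuccAbove (fun _ : Fin (n + 1) => ℝ) j).symm e
    have hcomp : ∫ p : ℝ × (Fin n → ℝ), G (e.symm p, α) = ∫ x : Fin (n + 1) → ℝ, G (x, α) :=
      hmp.integral_comp e.symm.measurableEmbedding (fun x => G (x, α))
    rw [← hcomp]
    -- integrability on the product
    have hhcont : Continuous (fun x : Fin (n + 1) → ℝ => G (x, α)) :=
      hGcont.comp (continuous_id.prodMk continuous_const)
    have hhsupp : HasCompactSupport (fun x : Fin (n + 1) → ℝ => G (x, α)) := by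
      refine HasCompactSupport.intro (K := {x | ((x, α) : (Fin (n + 1) → ℝ) × ℝ) ∈ K}) ?_ ?_
      · refine (hK.image continuous_fst).of_isClosed_subset
          (hK.isClosed.preimage (continuous_id.prodMk continuous_const)) ?_
        exact fun x hx => ⟨(x, α), hx, rfl⟩
      · exact fun x hx => hGsupp (x, α) hx
    have hhint : Integrable (fun x : Fin (n + 1) → ℝ => G (x, α)) :=
      hhcont.integrable_of_hasCompactSupport hhsupp
    have hint2 : Integrable (fun p : ℝ × (Fin n → ℝ) => G (e.symm p, α)) := by
      exact (hmp.integrable_comp_emb e.symm.measurableEmbedding).2 hhint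
    rw [Measure.volume_eq_prod] at hint2 ⊢
    rw [integral_prod_symm _ hint2]
    have hinner2 : ∀ y : Fin n → ℝ, (∫ a : ℝ, G (e.symm (a, y), α)) = 0 := by
      intro y
      have hrw : ∀ a : ℝ, G (e.symm (a, y), α) = deriv (fun s => g (j.insertNth s y, α)) a := by
        intro a
        have hsymm : (e.symm (a, y) : Fin (n + 1) → ℝ) = j.insertNth a y := by
          simp [he, MeasurableEquiv.piFinSuccAbove_symm_apply, Fin.insertNthEquiv, Equiv.coe_fn_mk]
        rw [hGdef]
        simp only [hsymm]
        rw [Fin.insertNth_apply_same]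
        congr 1
        funext s
        rw [Fin.update_insertNth]
      simp only [hrw]
      have hins : ContDiff ℝ 1 (fun a : ℝ => (j.insertNth a y : Fin (n + 1) → ℝ)) := by
        rw [contDiff_pi]
        intro k
        rcases eq_or_ne k j with rfl | hk
        · simp only [Fin.insertNth_apply_same]; exact contDiff_id
        · obtain ⟨k', rfl⟩ := Fin.exists_succAbove_eq hk
          simpa [Fin.insertNth_apply_succAbove] using
            (contDiff_const : ContDiff ℝ 1 (fun _ : ℝ => y k'))
      have hf1 : ContDiff ℝ 1 (fun a : ℝ => g (j.insertNth a y, α)) := by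
        refine (hg.of_le (by exact_mod_cast le_top)).comp ?_
        exact hins.prodMk contDiff_const
      have hs1 : HasCompactSupport (fun a : ℝ => g (j.insertNth a y, α)) := by
        refine HasCompactSupport.intro
          (K := {a : ℝ | ((j.insertNth a y, α) : (Fin (n + 1) → ℝ) × ℝ) ∈ K}) ?_
          (fun a ha => h0 _ ha)
        refine (hK.image ((continuous_apply j).comp continuous_fst)).of_isClosed_subset
          (hK.isClosed.preimage ?_) ?_
        · exact hins.continuous.prodMk continuous_const
        · intro a ha
          exact ⟨(j.insertNth a y, α), ha, by simp [Fin.insertNth_apply_same]⟩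
      exact oneD hf1 hs1
    simp only [hinner2, integral_zero]
  simp only [hinner, integral_zero]

set_option maxHeartbeats 1000000 in
/-- First derivative of the virial potential for the focusing divergence-form model:
`V'(t) = 4 Im ∫ (∑_j x_j ∂_{x_j}u) conj(u) dx dα`. -/
theorem stmt19 (d : ℕ) (hd : 1 ≤ d) (p : ℝ) (hp : 0 < p)
    (u : ℝ → (Fin d → ℝ) → ℝ → ℂ)
    (hsmooth : ContDiff ℝ (⊤ : ℕ∞) (fun q : ℝ × (Fin d → ℝ) × ℝ => u q.1 q.2.1 q.2.2))
    (hsupp : ∃ K : Set ((Fin d → ℝ) × ℝ), IsCompact K ∧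
      ∀ (t : ℝ) (x : Fin d → ℝ) (α : ℝ), (x, α) ∉ K → u t x α = 0)
    (heq : ∀ (t : ℝ) (x : Fin d → ℝ) (α : ℝ),
      Complex.I * pdT u t x α + lapX u t x α + ouDiv u t x α
        = -(((‖u t x α‖ ^ p : ℝ) : ℂ) * u t x α))
    (t : ℝ) :
    HasDerivAt (fun s : ℝ => ∫ q : (Fin d → ℝ) × ℝ,
        (∑ j : Fin d, (q.1 j) ^ 2) * ‖u s q.1 q.2‖ ^ 2)
      (4 * (∫ q : (Fin d → ℝ) × ℝ,
          (∑ j : Fin d, (q.1 j : ℂ) * pdX j u t q.1 q.2)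
            * (starRingEnd ℂ) (u t q.1 q.2)).im) t := by
  obtain ⟨n, rfl⟩ : ∃ n, d = n + 1 := ⟨d - 1, (Nat.succ_pred_eq_of_pos hd).symm⟩
  obtain ⟨K, hK, h0⟩ := hsupp
  have hu : ContDiff ℝ (⊤ : ℕ∞) (unc u) := hsmooth
  have hud : Differentiable ℝ (unc u) := hu.differentiable (by simp)
  have hCl : IsClosed K := hK.isClosed
  have hucont : Continuous (unc u) := hu.continuous
  have hTsm : ContDiff ℝ (⊤ : ℕ∞) (unc (pdT u)) := contDiff_unc_pdT hu
  -- the candidate derivative integrand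
  set F' : ℝ → (Fin (n + 1) → ℝ) × ℝ → ℝ := fun s q =>
    (∑ j : Fin (n + 1), q.1 j ^ 2) * (pdT u s q.1 q.2 * (starRingEnd ℂ) (u s q.1 q.2)
      + u s q.1 q.2 * (starRingEnd ℂ) (pdT u s q.1 q.2)).re with hF'def
  -- continuity of F' jointly
  have he3 : Continuous (fun z : ℝ × ((Fin (n + 1) → ℝ) × ℝ) =>
      ((z.1, z.2.1, z.2.2) : ℝ × (Fin (n + 1) → ℝ) × ℝ)) :=
    continuous_fst.prodMk ((continuous_fst.comp continuous_snd).prodMk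
      (continuous_snd.comp continuous_snd))
  have hu3 : Continuous (fun z : ℝ × ((Fin (n + 1) → ℝ) × ℝ) => u z.1 z.2.1 z.2.2) := hucont.comp he3
  have hT3 : Continuous (fun z : ℝ × ((Fin (n + 1) → ℝ) × ℝ) => pdT u z.1 z.2.1 z.2.2) :=
    hTsm.continuous.comp he3
  have hw3 : Continuous (fun z : ℝ × ((Fin (n + 1) → ℝ) × ℝ) => ∑ j : Fin (n + 1), z.2.1 j ^ 2) :=
    continuous_finset_sum _ fun j _ =>
      ((continuous_apply j).comp (continuous_fst.comp continuous_snd)).pow 2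
  have hF'cont : Continuous (fun z : ℝ × ((Fin (n + 1) → ℝ) × ℝ) => F' z.1 z.2) := by
    rw [hF'def]
    exact hw3.mul (Complex.continuous_re.comp
      ((hT3.mul (continuous_star.comp hu3)).add (hu3.mul (continuous_star.comp hT3))))
  -- bound on a compact neighborhood
  obtain ⟨C, hCbd⟩ := ((isCompact_closedBall t 1).prod hK).exists_bound_of_continuousOn
    hF'cont.continuousOn
  have h_bound : ∀ᵐ q : (Fin (n + 1) → ℝ) × ℝ, ∀ s ∈ Metric.ball t 1,
      ‖F' s q‖ ≤ K.indicator (fun _ => C) q := by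
    refine Filter.Eventually.of_forall fun q s hs => ?_
    by_cases hqK : q ∈ K
    · rw [Set.indicator_of_mem hqK]
      exact hCbd (s, q) ⟨Metric.ball_subset_closedBall hs, hqK⟩
    · rw [Set.indicator_of_notMem hqK]
      have h1 : u s q.1 q.2 = 0 := h0 s q.1 q.2 hqK
      have h2 : pdT u s q.1 q.2 = 0 := supp_pdT h0 s q.1 q.2 hqK
      simp [hF'def, h1, h2]
  have bound_int : Integrable (K.indicator (fun _ => C)) := by
    rw [integrable_indicator_iff hK.measurableSet]
    exact integrableOn_const hK.measure_lt_top.ne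
  have habs : ∀ z : ℂ, ‖z‖ ^ 2 = (z * (starRingEnd ℂ) z).re := fun z => by
    rw [Complex.mul_conj]; simp [Complex.sq_norm]
  have h_diff : ∀ᵐ q : (Fin (n + 1) → ℝ) × ℝ, ∀ s ∈ Metric.ball t 1,
      HasDerivAt (fun s' => (∑ j : Fin (n + 1), (q.1 j) ^ 2) * ‖u s' q.1 q.2‖ ^ 2)
        (F' s q) s := by
    refine Filter.Eventually.of_forall fun q s _ => ?_
    have h1 : HasDerivAt (fun s' => u s' q.1 q.2) (pdT u s q.1 q.2) s :=
      hasDerivAt_pdT hud s q.1 q.2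
    have h2 : HasDerivAt (fun s' => (starRingEnd ℂ) (u s' q.1 q.2))
        ((starRingEnd ℂ) (pdT u s q.1 q.2)) s := by
      have h2' := (Complex.conjCLE.toContinuousLinearMap.hasFDerivAt
        (x := u s q.1 q.2)).comp_hasDerivAt s h1
      exact h1.star
    have h3 := h1.mul h2
    have h4 := (Complex.reCLM.hasFDerivAt
      (x := u s q.1 q.2 * (starRingEnd ℂ) (u s q.1 q.2))).comp_hasDerivAt s h3
    have h5 := h4.const_mul (∑ j : Fin (n + 1), (q.1 j) ^ 2)
    have heqfun : (fun s' => (∑ j : Fin (n + 1), (q.1 j) ^ 2) * ‖u s' q.1 q.2‖ ^ 2)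
        = fun s' => (∑ j : Fin (n + 1), (q.1 j) ^ 2)
          * Complex.reCLM (u s' q.1 q.2 * (starRingEnd ℂ) (u s' q.1 q.2)) := by
      funext s'
      rw [habs]
      simp
    rw [heqfun]
    simpa [hF'def] using h5
  have hF_meas : ∀ᶠ s in nhds t, AEStronglyMeasurable
      (fun q : (Fin (n + 1) → ℝ) × ℝ => (∑ j : Fin (n + 1), (q.1 j) ^ 2) * ‖u s q.1 q.2‖ ^ 2)
      volume := by
    refine Filter.Eventually.of_forall fun s => (Continuous.aestronglyMeasurable ?_)
    have : Continuous (fun q : (Fin (n + 1) → ℝ) × ℝ => u s q.1 q.2) :=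
      hucont.comp (continuous_const.prodMk (continuous_fst.prodMk continuous_snd))
    exact (continuous_finset_sum _ fun j _ => (continuous_apply j).comp continuous_fst |>.pow 2).mul
      ((continuous_norm.comp this).pow 2)
  have hF_int : Integrable
      (fun q : (Fin (n + 1) → ℝ) × ℝ => (∑ j : Fin (n + 1), (q.1 j) ^ 2) * ‖u t q.1 q.2‖ ^ 2) := by
    have hcont : Continuous (fun q : (Fin (n + 1) → ℝ) × ℝ => u t q.1 q.2) :=
      hucont.comp (continuous_const.prodMk (continuous_fst.prodMk continuous_snd))
    refine Continuous.integrable_of_hasCompactSupport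
      ((continuous_finset_sum _ fun j _ => (continuous_apply j).comp continuous_fst |>.pow 2).mul
        ((continuous_norm.comp hcont).pow 2)) (HasCompactSupport.intro hK fun q hq => ?_)
    simp [h0 t q.1 q.2 hq]
  have hF'_meas : AEStronglyMeasurable (F' t) volume :=
    (hF'cont.comp (continuous_const.prodMk continuous_id)).aestronglyMeasurable
  have step1 := (hasDerivAt_integral_of_dominated_loc_of_deriv_le (μ := volume)
    (Metric.ball_mem_nhds t one_pos) hF_meas hF_int hF'_meas h_bound bound_int h_diff).2
  have keyval : ∫ q : (Fin (n + 1) → ℝ) × ℝ, F' t q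
      = 4 * (∫ q : (Fin (n + 1) → ℝ) × ℝ,
          (∑ j : Fin (n + 1), (q.1 j : ℂ) * pdX j u t q.1 q.2)
            * (starRingEnd ℂ) (u t q.1 q.2)).im := by
    -- smoothness of the various derivatives of `u`
    have hXsm : ∀ j : Fin (n + 1), ContDiff ℝ (⊤ : ℕ∞) (unc (pdX j u)) :=
      fun j => contDiff_unc_pdX hu j
    have hXXsm : ∀ j : Fin (n + 1), ContDiff ℝ (⊤ : ℕ∞) (unc (pdX j (pdX j u))) :=
      fun j => contDiff_unc_pdX (hXsm j) j
    have hAsm : ContDiff ℝ (⊤ : ℕ∞) (unc (pdA u)) := contDiff_unc_pdA hu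
    have hvEsm : ContDiff ℝ (⊤ : ℕ∞)
        (unc (fun t x α => (Real.exp (-α ^ 2 / 2) : ℂ) * pdA u t x α)) := by
      have h2 : ContDiff ℝ (⊤ : ℕ∞) (fun q : ℝ × (Fin (n + 1) → ℝ) × ℝ => q.2.2) :=
        contDiff_snd.comp contDiff_snd
      have h1 : ContDiff ℝ (⊤ : ℕ∞)
          (fun q : ℝ × (Fin (n + 1) → ℝ) × ℝ => ((Real.exp (-q.2.2 ^ 2 / 2) : ℝ) : ℂ)) :=
        Complex.ofRealCLM.contDiff.comp (Real.contDiff_exp.comp (((h2.pow 2).neg).div_const 2))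
      exact h1.mul hAsm
    have hOUsm : ContDiff ℝ (⊤ : ℕ∞) (unc (ouDiv u)) := contDiff_unc_pdA hvEsm
    have hvEd : Differentiable ℝ
        (unc (fun t x α => (Real.exp (-α ^ 2 / 2) : ℂ) * pdA u t x α)) :=
      hvEsm.differentiable (by simp)
    have hXd : ∀ j, Differentiable ℝ (unc (pdX j u)) :=
      fun j => (hXsm j).differentiable (by simp)
    -- vanishing off `K`
    have h0X : ∀ (j : Fin (n + 1)) (t' : ℝ) x α, (x, α) ∉ K → pdX j u t' x α = 0 :=
      fun j => supp_pdX hCl h0 j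
    have h0XX : ∀ (j : Fin (n + 1)) (t' : ℝ) x α, (x, α) ∉ K → pdX j (pdX j u) t' x α = 0 :=
      fun j => supp_pdX hCl (h0X j) j
    have h0A : ∀ (t' : ℝ) x α, (x, α) ∉ K → pdA u t' x α = 0 := supp_pdA hCl h0
    have h0vE : ∀ (t' : ℝ) x α, (x, α) ∉ K →
        (fun t x α => (Real.exp (-α ^ 2 / 2) : ℂ) * pdA u t x α) t' x α = 0 := by
      intro t' x α h
      show (Real.exp (-α ^ 2 / 2) : ℂ) * pdA u t' x α = 0
      rw [h0A t' x α h, mul_zero]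
    have h0OU : ∀ (t' : ℝ) x α, (x, α) ∉ K → ouDiv u t' x α = 0 := supp_pdA hCl h0vE
    -- the curve `q ↦ (t, q)`
    have hc2 : ContDiff ℝ (⊤ : ℕ∞)
        (fun q : (Fin (n + 1) → ℝ) × ℝ => ((t, q.1, q.2) : ℝ × (Fin (n + 1) → ℝ) × ℝ)) :=
      contDiff_const.prodMk (contDiff_fst.prodMk contDiff_snd)
    have hwq : Continuous (fun q : (Fin (n + 1) → ℝ) × ℝ => ∑ k : Fin (n + 1), q.1 k ^ 2) :=
      continuous_finset_sum _ fun k _ => ((continuous_apply k).comp continuous_fst).pow 2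
    have hcu : Continuous (fun q : (Fin (n + 1) → ℝ) × ℝ => u t q.1 q.2) :=
      (hu.comp hc2).continuous
    have hcX : ∀ j, Continuous (fun q : (Fin (n + 1) → ℝ) × ℝ => pdX j u t q.1 q.2) :=
      fun j => ((hXsm j).comp hc2).continuous
    have hcXX : ∀ j, Continuous (fun q : (Fin (n + 1) → ℝ) × ℝ => pdX j (pdX j u) t q.1 q.2) :=
      fun j => ((hXXsm j).comp hc2).continuous
    have hcOU : Continuous (fun q : (Fin (n + 1) → ℝ) × ℝ => ouDiv u t q.1 q.2) :=
      (hOUsm.comp hc2).continuous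
    -- integrability of the various integrands
    have mkInt : ∀ f : (Fin (n + 1) → ℝ) × ℝ → ℝ, Continuous f → (∀ q, q ∉ K → f q = 0)
        → Integrable f := fun f hf hf0 =>
      hf.integrable_of_hasCompactSupport (HasCompactSupport.intro hK hf0)
    have hIntP : ∀ j, Integrable (fun q : (Fin (n + 1) → ℝ) × ℝ =>
        (∑ k : Fin (n + 1), q.1 k ^ 2)
          * (pdX j (pdX j u) t q.1 q.2 * (starRingEnd ℂ) (u t q.1 q.2)).im) := by
      intro j
      refine mkInt _ (hwq.mul (Complex.continuous_im.comp
        ((hcXX j).mul (continuous_star.comp hcu)))) ?_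
      intro q hq; simp [h0 t q.1 q.2 hq]
    have hIntPou : Integrable (fun q : (Fin (n + 1) → ℝ) × ℝ =>
        (∑ k : Fin (n + 1), q.1 k ^ 2)
          * (ouDiv u t q.1 q.2 * (starRingEnd ℂ) (u t q.1 q.2)).im) := by
      refine mkInt _ (hwq.mul (Complex.continuous_im.comp
        (hcOU.mul (continuous_star.comp hcu)))) ?_
      intro q hq; simp [h0 t q.1 q.2 hq]
    have hIntR : ∀ j, Integrable (fun q : (Fin (n + 1) → ℝ) × ℝ =>
        q.1 j * (pdX j u t q.1 q.2 * (starRingEnd ℂ) (u t q.1 q.2)).im) := by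
      intro j
      refine mkInt _ (((continuous_apply j).comp continuous_fst).mul (Complex.continuous_im.comp
        ((hcX j).mul (continuous_star.comp hcu)))) ?_
      intro q hq; simp [h0 t q.1 q.2 hq]
    -- pointwise identity for `F' t` coming from the PDE
    have hptwF : ∀ q : (Fin (n + 1) → ℝ) × ℝ, F' t q
        = -2 * ((∑ j : Fin (n + 1), (∑ k : Fin (n + 1), q.1 k ^ 2)
            * (pdX j (pdX j u) t q.1 q.2 * (starRingEnd ℂ) (u t q.1 q.2)).im)
          + (∑ k : Fin (n + 1), q.1 k ^ 2)
            * (ouDiv u t q.1 q.2 * (starRingEnd ℂ) (u t q.1 q.2)).im) := by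
      intro q
      have h := heq t q.1 q.2
      have h3 : Complex.I * (Complex.I * pdT u t q.1 q.2 + lapX u t q.1 q.2 + ouDiv u t q.1 q.2)
          = Complex.I * (-(((‖u t q.1 q.2‖ ^ p : ℝ) : ℂ) * u t q.1 q.2)) := by
        rw [h]
      rw [mul_add, mul_add, ← mul_assoc, Complex.I_mul_I] at h3
      have hpd : pdT u t q.1 q.2
          = Complex.I * ((((‖u t q.1 q.2‖ ^ p : ℝ) : ℂ) * u t q.1 q.2)
            + lapX u t q.1 q.2 + ouDiv u t q.1 q.2) := by
        linear_combination (-1 : ℂ) * h3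
      have hzero : ((((‖u t q.1 q.2‖ ^ p : ℝ) : ℂ) * u t q.1 q.2)
          * (starRingEnd ℂ) (u t q.1 q.2)).im = 0 := by
        rw [mul_assoc, Complex.mul_conj]
        simp [← Complex.ofReal_mul]
      have hre : (pdT u t q.1 q.2 * (starRingEnd ℂ) (u t q.1 q.2)).re
          = -(lapX u t q.1 q.2 * (starRingEnd ℂ) (u t q.1 q.2)).im
            - (ouDiv u t q.1 q.2 * (starRingEnd ℂ) (u t q.1 q.2)).im := by
        rw [hpd, mul_assoc, Complex.I_mul_re, add_mul, add_mul, Complex.add_im, Complex.add_im,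
          hzero]
        ring
      have hswap : (u t q.1 q.2 * (starRingEnd ℂ) (pdT u t q.1 q.2)).re
          = (pdT u t q.1 q.2 * (starRingEnd ℂ) (u t q.1 q.2)).re := by
        rw [show u t q.1 q.2 * (starRingEnd ℂ) (pdT u t q.1 q.2)
            = (starRingEnd ℂ) (pdT u t q.1 q.2 * (starRingEnd ℂ) (u t q.1 q.2)) by
          rw [map_mul, Complex.conj_conj]; ring, Complex.conj_re]
      have hlap : (lapX u t q.1 q.2 * (starRingEnd ℂ) (u t q.1 q.2)).im
          = ∑ j : Fin (n + 1),
              (pdX j (pdX j u) t q.1 q.2 * (starRingEnd ℂ) (u t q.1 q.2)).im := by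
        show ((∑ j : Fin (n + 1), pdX j (pdX j u) t q.1 q.2)
          * (starRingEnd ℂ) (u t q.1 q.2)).im = _
        rw [Finset.sum_mul, Complex.im_sum]
      simp only [hF'def]
      rw [Complex.add_re, hswap, hre, hlap, ← Finset.mul_sum]
      ring
    -- the Ornstein--Uhlenbeck term integrates to zero
    have claimOU : (∫ q : (Fin (n + 1) → ℝ) × ℝ,
        (∑ k : Fin (n + 1), q.1 k ^ 2)
          * (ouDiv u t q.1 q.2 * (starRingEnd ℂ) (u t q.1 q.2)).im) = 0 := by
      set g : (Fin (n + 1) → ℝ) × ℝ → ℝ := fun q =>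
        (∑ k : Fin (n + 1), q.1 k ^ 2)
          * (((Real.exp (-q.2 ^ 2 / 2) : ℝ) : ℂ) * pdA u t q.1 q.2
            * (starRingEnd ℂ) (u t q.1 q.2)).im with hgdef
      have hgsm : ContDiff ℝ (⊤ : ℕ∞) g := by
        rw [hgdef]
        refine ContDiff.mul (ContDiff.sum fun k _ => ?_) ?_
        · exact (contDiff_pi.mp contDiff_fst k).pow 2
        · refine Complex.imCLM.contDiff.comp (ContDiff.mul (ContDiff.mul ?_ (hAsm.comp hc2)) ?_)
          · exact Complex.ofRealCLM.contDiff.comp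
              (Real.contDiff_exp.comp (((contDiff_snd.pow 2).neg).div_const 2))
          · exact Complex.conjCLE.toContinuousLinearMap.contDiff.comp (hu.comp hc2)
      have hg0 : ∀ q, q ∉ K → g q = 0 := by
        intro q hq
        simp [hgdef, h0 t q.1 q.2 hq]
      have h1 := int_pdA_zero g hgsm hK hg0
      have hptw : ∀ q : (Fin (n + 1) → ℝ) × ℝ,
          deriv (fun s => g (q.1, s)) q.2
            = (∑ k : Fin (n + 1), q.1 k ^ 2)
              * (ouDiv u t q.1 q.2 * (starRingEnd ℂ) (u t q.1 q.2)).im := by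
        intro q
        have hA1 : HasDerivAt (fun s => u t q.1 s) (pdA u t q.1 q.2) q.2 :=
          hasDerivAt_pdA hud t q.1 q.2
        have hA2 : HasDerivAt (fun s => ((Real.exp (-s ^ 2 / 2) : ℝ) : ℂ) * pdA u t q.1 s)
            (ouDiv u t q.1 q.2) q.2 := hasDerivAt_pdA hvEd t q.1 q.2
        have hA3 : HasDerivAt (fun s => (starRingEnd ℂ) (u t q.1 s))
            ((starRingEnd ℂ) (pdA u t q.1 q.2)) q.2 := by
          exact hA1.star
        have hA4 := hA2.mul hA3
        have hA5 := (Complex.imCLM.hasFDerivAt (x := _)).comp_hasDerivAt q.2 hA4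
        have hA6 := hA5.const_mul (∑ k : Fin (n + 1), q.1 k ^ 2)
        have hzero2 : (((Real.exp (-q.2 ^ 2 / 2) : ℝ) : ℂ) * pdA u t q.1 q.2
            * (starRingEnd ℂ) (pdA u t q.1 q.2)).im = 0 := by
          rw [mul_assoc, Complex.mul_conj, ← Complex.ofReal_mul, Complex.ofReal_im]
        have hD : HasDerivAt (fun s => g (q.1, s))
            ((∑ k : Fin (n + 1), q.1 k ^ 2)
              * (ouDiv u t q.1 q.2 * (starRingEnd ℂ) (u t q.1 q.2)).im) q.2 := by
          have := hA6
          simp only [Complex.imCLM_apply] at this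
          rw [hgdef]
          simp only
          exact this.congr_deriv (by rw [Complex.add_im, hzero2]; ring)
        exact hD.deriv
      rw [show (fun q : (Fin (n + 1) → ℝ) × ℝ =>
          (∑ k : Fin (n + 1), q.1 k ^ 2)
            * (ouDiv u t q.1 q.2 * (starRingEnd ℂ) (u t q.1 q.2)).im)
        = fun q : (Fin (n + 1) → ℝ) × ℝ => deriv (fun s => g (q.1, s)) q.2 from
          funext fun q => (hptw q).symm]
      exact h1
    -- integration by parts in the j-th Euclidean variable
    have claimX : ∀ j : Fin (n + 1),
        (∫ q : (Fin (n + 1) → ℝ) × ℝ, (∑ k : Fin (n + 1), q.1 k ^ 2)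
          * (pdX j (pdX j u) t q.1 q.2 * (starRingEnd ℂ) (u t q.1 q.2)).im)
        = -2 * ∫ q : (Fin (n + 1) → ℝ) × ℝ,
            q.1 j * (pdX j u t q.1 q.2 * (starRingEnd ℂ) (u t q.1 q.2)).im := by
      intro j
      set g : (Fin (n + 1) → ℝ) × ℝ → ℝ := fun q =>
        (∑ k : Fin (n + 1), q.1 k ^ 2)
          * (pdX j u t q.1 q.2 * (starRingEnd ℂ) (u t q.1 q.2)).im with hgdef
      have hgsm : ContDiff ℝ (⊤ : ℕ∞) g := by
        rw [hgdef]
        refine ContDiff.mul (ContDiff.sum fun k _ => ?_) ?_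
        · exact (contDiff_pi.mp contDiff_fst k).pow 2
        · exact Complex.imCLM.contDiff.comp (ContDiff.mul ((hXsm j).comp hc2)
            (Complex.conjCLE.toContinuousLinearMap.contDiff.comp (hu.comp hc2)))
      have hg0 : ∀ q, q ∉ K → g q = 0 := by
        intro q hq
        simp [hgdef, h0 t q.1 q.2 hq]
      have h1 := int_pdX_zero j g hgsm hK hg0
      have hptw : ∀ q : (Fin (n + 1) → ℝ) × ℝ,
          deriv (fun s => g (Function.update q.1 j s, q.2)) (q.1 j)
            = 2 * (q.1 j * (pdX j u t q.1 q.2 * (starRingEnd ℂ) (u t q.1 q.2)).im)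
              + (∑ k : Fin (n + 1), q.1 k ^ 2)
                * (pdX j (pdX j u) t q.1 q.2 * (starRingEnd ℂ) (u t q.1 q.2)).im := by
        intro q
        have hwD : HasDerivAt (fun s : ℝ => ∑ k : Fin (n + 1), Function.update q.1 j s k ^ 2)
            (2 * q.1 j) (q.1 j) := by
          have hk : ∀ k : Fin (n + 1), HasDerivAt
              (fun s : ℝ => Function.update q.1 j s k ^ 2)
              (if k = j then 2 * q.1 j else 0) (q.1 j) := by
            intro k
            rcases eq_or_ne k j with rfl | hkj
            · simp only [if_pos rfl]
              have hfun : (fun s : ℝ => Function.update q.1 k s k ^ 2) = fun s => s ^ 2 := by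
                funext s; rw [Function.update_self]
              rw [hfun]
              simpa using hasDerivAt_pow 2 (q.1 k)
            · simp only [if_neg hkj]
              have hfun : (fun s : ℝ => Function.update q.1 j s k ^ 2)
                  = fun _ => q.1 k ^ 2 := by
                funext s; rw [Function.update_of_ne hkj]
              rw [hfun]; exact hasDerivAt_const _ _
          have hsum := HasDerivAt.sum (fun k (_ : k ∈ Finset.univ) => hk k)
          simpa [Finset.sum_fn] using hsum
        have hXu : HasDerivAt (fun s => u t (Function.update q.1 j s) q.2)
            (pdX j u t q.1 q.2) (q.1 j) := hasDerivAt_pdX hud j t q.1 q.2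
        have hXX1 : HasDerivAt (fun s => pdX j u t (Function.update q.1 j s) q.2)
            (pdX j (pdX j u) t q.1 q.2) (q.1 j) := hasDerivAt_pdX (hXd j) j t q.1 q.2
        have hXc : HasDerivAt (fun s => (starRingEnd ℂ) (u t (Function.update q.1 j s) q.2))
            ((starRingEnd ℂ) (pdX j u t q.1 q.2)) (q.1 j) := by
          exact hXu.star
        have hM := hXX1.mul hXc
        have hIm := (Complex.imCLM.hasFDerivAt (x := _)).comp_hasDerivAt (q.1 j) hM
        have htot := hwD.mul hIm
        have hzero2 : (pdX j u t q.1 q.2 * (starRingEnd ℂ) (pdX j u t q.1 q.2)).im = 0 := by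
          rw [Complex.mul_conj, Complex.ofReal_im]
        have hD : HasDerivAt (fun s => g (Function.update q.1 j s, q.2))
            (2 * (q.1 j * (pdX j u t q.1 q.2 * (starRingEnd ℂ) (u t q.1 q.2)).im)
              + (∑ k : Fin (n + 1), q.1 k ^ 2)
                * (pdX j (pdX j u) t q.1 q.2 * (starRingEnd ℂ) (u t q.1 q.2)).im) (q.1 j) := by
          have h5 := htot
          simp only [Complex.imCLM_apply, Function.comp, Function.update_eq_self] at h5
          rw [hgdef]
          simp only
          exact h5.congr_deriv (by
            rw [Complex.add_im, hzero2]; simp only [Pi.mul_apply, Function.update_eq_self]; ring)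
        exact hD.deriv
      rw [show (fun q : (Fin (n + 1) → ℝ) × ℝ =>
          deriv (fun s => g (Function.update q.1 j s, q.2)) (q.1 j))
        = fun q : (Fin (n + 1) → ℝ) × ℝ =>
            2 * (q.1 j * (pdX j u t q.1 q.2 * (starRingEnd ℂ) (u t q.1 q.2)).im)
              + (∑ k : Fin (n + 1), q.1 k ^ 2)
                * (pdX j (pdX j u) t q.1 q.2 * (starRingEnd ℂ) (u t q.1 q.2)).im from
          funext fun q => hptw q] at h1
      rw [integral_add ((hIntR j).const_mul 2) (hIntP j), integral_const_mul] at h1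
      linarith
    -- identify the imaginary part of the complex integral
    have hIntC : Integrable (fun q : (Fin (n + 1) → ℝ) × ℝ =>
        (∑ j : Fin (n + 1), (q.1 j : ℂ) * pdX j u t q.1 q.2)
          * (starRingEnd ℂ) (u t q.1 q.2)) := by
      refine Continuous.integrable_of_hasCompactSupport ?_ (HasCompactSupport.intro hK ?_)
      · exact (continuous_finset_sum _ fun j _ =>
          (Complex.continuous_ofReal.comp ((continuous_apply j).comp continuous_fst)).mul
            (hcX j)).mul (continuous_star.comp hcu)
      · intro q hq; simp [h0 t q.1 q.2 hq]
    have him : (∫ q : (Fin (n + 1) → ℝ) × ℝ,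
        (∑ j : Fin (n + 1), (q.1 j : ℂ) * pdX j u t q.1 q.2)
          * (starRingEnd ℂ) (u t q.1 q.2)).im
        = ∑ j : Fin (n + 1), ∫ q : (Fin (n + 1) → ℝ) × ℝ,
            q.1 j * (pdX j u t q.1 q.2 * (starRingEnd ℂ) (u t q.1 q.2)).im := by
      have h1 := (ContinuousLinearMap.integral_comp_comm Complex.imCLM hIntC).symm
      simp only [Complex.imCLM_apply] at h1
      rw [h1, ← integral_finset_sum _ (fun j _ => hIntR j)]
      congr 1
      funext q
      rw [Finset.sum_mul, Complex.im_sum]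
      refine Finset.sum_congr rfl fun j _ => ?_
      rw [mul_assoc]
      simp [Complex.mul_im]
    -- put everything together
    calc (∫ q : (Fin (n + 1) → ℝ) × ℝ, F' t q)
        = ∫ q : (Fin (n + 1) → ℝ) × ℝ,
            -2 * ((∑ j : Fin (n + 1), (∑ k : Fin (n + 1), q.1 k ^ 2)
              * (pdX j (pdX j u) t q.1 q.2 * (starRingEnd ℂ) (u t q.1 q.2)).im)
            + (∑ k : Fin (n + 1), q.1 k ^ 2)
              * (ouDiv u t q.1 q.2 * (starRingEnd ℂ) (u t q.1 q.2)).im) := by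
          exact integral_congr_ae (Filter.EventuallyEq.of_eq (funext fun q => hptwF q))
      _ = -2 * ((∑ j : Fin (n + 1), ∫ q : (Fin (n + 1) → ℝ) × ℝ,
              (∑ k : Fin (n + 1), q.1 k ^ 2)
                * (pdX j (pdX j u) t q.1 q.2 * (starRingEnd ℂ) (u t q.1 q.2)).im)
            + ∫ q : (Fin (n + 1) → ℝ) × ℝ, (∑ k : Fin (n + 1), q.1 k ^ 2)
                * (ouDiv u t q.1 q.2 * (starRingEnd ℂ) (u t q.1 q.2)).im) := by
          rw [integral_const_mul,
            integral_add (integrable_finset_sum _ fun j _ => hIntP j) hIntPou,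
            integral_finset_sum _ (fun j _ => hIntP j)]
      _ = -2 * ((∑ j : Fin (n + 1), -2 * ∫ q : (Fin (n + 1) → ℝ) × ℝ,
              q.1 j * (pdX j u t q.1 q.2 * (starRingEnd ℂ) (u t q.1 q.2)).im) + 0) := by
          rw [claimOU]
          congr 2
          exact Finset.sum_congr rfl fun j _ => claimX j
      _ = 4 * ∑ j : Fin (n + 1), ∫ q : (Fin (n + 1) → ℝ) × ℝ,
              q.1 j * (pdX j u t q.1 q.2 * (starRingEnd ℂ) (u t q.1 q.2)).im := by
          rw [← Finset.mul_sum]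
          ring
      _ = 4 * (∫ q : (Fin (n + 1) → ℝ) × ℝ,
          (∑ j : Fin (n + 1), (q.1 j : ℂ) * pdX j u t q.1 q.2)
            * (starRingEnd ℂ) (u t q.1 q.2)).im := by
          rw [him]
  rw [← keyval]
  exact step1
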